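/- In the combinatorial model of width: transposing two adjacent critical points of the same type (two minima or two maxima) leaves the total width unchanged, and sliding a minimum below an adjacent maximum (transposing ε_k = -1, ε_{k+1} = +1 to ε_k = +1, ε_{k+1} = -1) increases the total width by 4. -/
import Mathlib


/-!
STATEMENT 3: In the combinatorial model of width: transposing two adjacent critical
points of the same type (two minima or two maxima) leaves the total width unchanged, and
sliding a minimum below an adjacent maximum (transposing `ε k = -1, ε (k+1) = +1` to
`ε k = +1, ε (k+1) = -1`) increases the total width by 4.

Model (as in the paper): critical points listed bottom to top as `ε 0, …, ε (n-1)` with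
values in `{+1, -1}` (`+1` = minimum, `-1` = maximum), partial width above the first `i`
critical points `gapWidth ε i = ∑_{j < i} 2 ε j`, total width
`W(ε) = ∑_{i ∈ range n} gapWidth ε i`.
-/

/-- width of the level sphere lying above exactly the first `i` critical points -/
def gapWidth (ε : ℕ → ℤ) (i : ℕ) : ℤ := ∑ j ∈ Finset.range i, 2 * ε j

/-- total width of a link with `n` critical points of types `ε` -/
def totalWidth (ε : ℕ → ℤ) (n : ℕ) : ℤ := ∑ i ∈ Finset.range n, gapWidth ε i

/-- the sequence obtained by transposing the adjacent critical points `k` and `k+1` -/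
def swapAt (ε : ℕ → ℤ) (k : ℕ) : ℕ → ℤ :=
  fun i => if i = k then ε (k + 1) else if i = k + 1 then ε k else ε i

theorem transposition_width_changes
    (ε : ℕ → ℤ) (n k : ℕ)
    (hε : ∀ i, ε i = 1 ∨ ε i = -1)
    (hk : k + 1 < n) :
    -- transposing two adjacent critical points of the same type keeps the width
    (ε k = ε (k + 1) → totalWidth (swapAt ε k) n = totalWidth ε n) ∧
    -- sliding a minimum below an adjacent maximum increases the width by 4
    (ε k = -1 → ε (k + 1) = 1 → totalWidth (swapAt ε k) n = totalWidth ε n + 4) := by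
  have hgap : ∀ i, gapWidth (swapAt ε k) i =
      gapWidth ε i + (if i = k + 1 then 2 * (ε (k + 1) - ε k) else 0) := by
    intro i
    induction i with
    | zero => simp [gapWidth]
    | succ m ih =>
      have h1 : gapWidth (swapAt ε k) (m + 1)
          = gapWidth (swapAt ε k) m + 2 * swapAt ε k m := by
        simp [gapWidth, Finset.sum_range_succ]
      have h2 : gapWidth ε (m + 1) = gapWidth ε m + 2 * ε m := by
        simp [gapWidth, Finset.sum_range_succ]
      rw [h1, h2, ih]
      unfold swapAt
      rcases eq_or_ne m k with h | h
      · subst h; simp; ring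
      · rcases eq_or_ne m (k + 1) with h' | h'
        · subst h'; simp; ring
        · have : m + 1 ≠ k + 1 := by omega
          simp [h, h', this]
  have htot : totalWidth (swapAt ε k) n = totalWidth ε n + 2 * (ε (k + 1) - ε k) := by
    unfold totalWidth
    rw [Finset.sum_congr rfl (fun i _ => hgap i), Finset.sum_add_distrib,
      Finset.sum_ite_eq' (Finset.range n) (k + 1)]
    simp [Finset.mem_range.mpr hk]
  constructor
  · intro h; rw [htot, h]; ring
  · intro h1 h2; rw [htot, h1, h2]; ring
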